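/- Let 𝓘 be the set of binary functions f with f(0,1)=f(1,0)=0 and f(0,0)·f(1,1) ≠ 0 (invertible diagonal 2×2 matrices), let NEQ be the binary disequality function, and let t be the symmetric binary function [0,1,μ] (matrix [[0,1],[1,μ]]) for some μ ≠ 0. Then every non-degenerate binary function (i.e., every binary function whose 2×2 matrix is invertible) lies in the holant clone generated by 𝓘 ∪ {NEQ, t}. -/

import Mathlib

/-!
Binary functions are 2×2 matrices and contracting the middle arguments of a tensor product is
matrix multiplication, so the binary functions of the clone are closed under products.
Every invertible matrix is a product of invertible diagonal matrices and transvections. The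
diagonal ones lie in `𝓘`, an upper transvection is a lower one conjugated by `NEQ`, and
the lower transvection `[[1,0],[c,1]]` is `diag(d,d⁻¹) · t · diag(d,d⁻¹) · NEQ`
for `d² = μ / c`.
-/

/-- A Boolean-input complex-valued function together with its arity. -/
abbrev Fn : Type := Σ n : ℕ, (Fin n → Bool) → ℂ

/-- The holant clone generated by `F`: the closure of `F` under tensor product,
permutation of arguments, and contraction of the last two arguments. -/
inductive HClone (F : Set Fn) : Fn → Prop
  | base {f : Fn} : f ∈ F → HClone F f
  | tensor {k l : ℕ} {f : (Fin k → Bool) → ℂ} {g : (Fin l → Bool) → ℂ} :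
      HClone F ⟨k, f⟩ → HClone F ⟨l, g⟩ →
      HClone F ⟨k + l, fun x => f (fun i => x (Fin.castAdd l i)) *
        g (fun j => x (Fin.natAdd k j))⟩
  | perm {k : ℕ} {f : (Fin k → Bool) → ℂ} (π : Equiv.Perm (Fin k)) :
      HClone F ⟨k, f⟩ → HClone F ⟨k, fun x => f (fun i => x (π i))⟩
  | contract {k : ℕ} {f : (Fin (k + 2) → Bool) → ℂ} :
      HClone F ⟨k + 2, f⟩ →
      HClone F ⟨k, fun x => ∑ y : Bool, f (Fin.snoc (Fin.snoc x y) y)⟩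

/-- `𝓘`: binary functions corresponding to invertible diagonal 2×2 matrices. -/
def InI (f : (Fin 2 → Bool) → ℂ) : Prop :=
  f ![false, true] = 0 ∧ f ![true, false] = 0 ∧
    f ![false, false] * f ![true, true] ≠ 0

/-- The binary disequality function. -/
def NEQfn : (Fin 2 → Bool) → ℂ := fun x => if x 0 = x 1 then 0 else 1

/-- The symmetric binary function `t = [0,1,μ]`, with matrix `[[0,1],[1,μ]]`. -/
def tfn (μ : ℂ) : (Fin 2 → Bool) → ℂ := fun x =>
  if x 0 = x 1 then (if x 0 then μ else 0) else 1

open Matrix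

theorem Matrix.det_bool {R : Type*} [CommRing R] (M : Matrix Bool Bool R) :
    M.det = M false false * M true true - M false true * M true false := by
  rw [← det_reindex_self finTwoEquiv.symm M, det_fin_two]
  rfl

def binFn (M : Matrix Bool Bool ℂ) : (Fin 2 → Bool) → ℂ := fun x => M (x 0) (x 1)

theorem binFn_of (f : (Fin 2 → Bool) → ℂ) : binFn (Matrix.of fun a b => f ![a, b]) = f := by
  funext x
  exact congrArg f (List.ofFn_inj.mp rfl)

def swapMatrix : Matrix Bool Bool ℂ := Matrix.of fun a b => if a = b then 0 else 1

def tMatrix (μ : ℂ) : Matrix Bool Bool ℂ :=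
  Matrix.of fun a b => if a = b then (if a then μ else 0) else 1

theorem swapMatrix_mul_transvection_mul_swapMatrix (c : ℂ) :
    swapMatrix * transvection true false c * swapMatrix = transvection false true c := by
  ext i j
  cases i <;> cases j <;> simp [swapMatrix, transvection, mul_apply]

theorem diagonal_mul_tMatrix_mul_diagonal_mul_swapMatrix (μ : ℂ) {d : ℂ} (hd : d ≠ 0) :
    let D := diagonal fun b => bif b then d⁻¹ else d
    D * tMatrix μ * D * swapMatrix = transvection true false (μ / d ^ 2) := by
  ext i j
  cases i <;> cases j <;> simp [tMatrix, swapMatrix, transvection, mul_apply, hd]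
  field_simp

namespace HClone

variable {F : Set Fn}

/-- Permuting `A ⊗ B` so that the column argument of `A` and the row argument of `B` come
last, and contracting them, yields `A * B`. -/
theorem binFn_mul {A B : Matrix Bool Bool ℂ}
    (hA : HClone F ⟨2, binFn A⟩) (hB : HClone F ⟨2, binFn B⟩) :
    HClone F ⟨2, binFn (A * B)⟩ := by
  let π : Equiv.Perm (Fin 4) := ⟨![0, 2, 3, 1], ![0, 3, 1, 2], by decide, by decide⟩
  convert contract (perm π (tensor hA hB)) using 2
  funext x
  have hsnoc (y : Bool) : (Fin.snoc (Fin.snoc x y) y : Fin 4 → Bool) = ![x 0, x 1, y, y] := by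
    funext i; fin_cases i <;> rfl
  simp [hsnoc, binFn, π, mul_apply, Fin.castAdd, Fin.natAdd, Fin.castLE]

theorem binFn_of_det_ne_zero
    (hdiag : ∀ D : Bool → ℂ, D false * D true ≠ 0 → HClone F ⟨2, binFn (diagonal D)⟩)
    (hlower : ∀ c, HClone F ⟨2, binFn (transvection true false c)⟩)
    (hswap : HClone F ⟨2, binFn swapMatrix⟩)
    {M : Matrix Bool Bool ℂ} (hM : M.det ≠ 0) : HClone F ⟨2, binFn M⟩ := by
  refine diagonal_transvection_induction_of_det_ne_zero (fun M => HClone F ⟨2, binFn M⟩) M hM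
    (fun D hD => hdiag D (by rwa [det_diagonal, Fintype.prod_bool, mul_comm] at hD)) ?_
    (fun _ _ _ _ => binFn_mul)
  rintro ⟨_ | _, _ | _, hij, c⟩ <;> simp only [ne_eq, not_true_eq_false] at hij
  · rw [TransvectionStruct.toMatrix, ← swapMatrix_mul_transvection_mul_swapMatrix]
    exact binFn_mul (binFn_mul hswap (hlower c)) hswap
  · exact hlower c

end HClone

abbrev holantGens (μ : ℂ) : Set Fn :=
  (fun g => (⟨2, g⟩ : Fn)) '' {g | InI g} ∪ {⟨2, NEQfn⟩, ⟨2, tfn μ⟩}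

theorem diagonal_mem_holantGens {μ : ℂ} {D : Bool → ℂ} (hD : D false * D true ≠ 0) :
    HClone (holantGens μ) ⟨2, binFn (diagonal D)⟩ :=
  HClone.base (Or.inl ⟨_, by simpa [InI, binFn] using hD, rfl⟩)

theorem swapMatrix_mem_holantGens (μ : ℂ) : HClone (holantGens μ) ⟨2, binFn swapMatrix⟩ :=
  HClone.base (Or.inr (Or.inl rfl))

theorem tMatrix_mem_holantGens (μ : ℂ) : HClone (holantGens μ) ⟨2, binFn (tMatrix μ)⟩ :=
  HClone.base (Or.inr (Or.inr rfl))

theorem transvection_mem_holantGens {μ : ℂ} (hμ : μ ≠ 0) (c : ℂ) :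
    HClone (holantGens μ) ⟨2, binFn (transvection true false c)⟩ := by
  rcases eq_or_ne c 0 with rfl | hc
  · simpa using diagonal_mem_holantGens (μ := μ) (D := 1) (by simp)
  obtain ⟨d, hd⟩ := IsAlgClosed.exists_pow_nat_eq (μ / c) two_pos
  have hd0 : d ≠ 0 := by
    rintro rfl
    exact div_ne_zero hμ hc (by simpa using hd.symm)
  have hμc : μ / d ^ 2 = c := by rw [hd]; field_simp
  have hD := diagonal_mem_holantGens (μ := μ) (D := fun b => bif b then d⁻¹ else d)
    (by simp [hd0])
  rw [← hμc, ← diagonal_mul_tMatrix_mul_diagonal_mul_swapMatrix μ hd0]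
  exact ((hD.binFn_mul (tMatrix_mem_holantGens μ)).binFn_mul hD).binFn_mul
    (swapMatrix_mem_holantGens μ)

/-- Every non-degenerate binary function (one whose 2×2 matrix is invertible) lies in
the holant clone generated by `𝓘 ∪ {NEQ, t}`, where `t = [0,1,μ]` with `μ ≠ 0`. -/
theorem nondeg_binary_in_clone (μ : ℂ) (hμ : μ ≠ 0)
    (f : (Fin 2 → Bool) → ℂ)
    (hf : f ![false, false] * f ![true, true] -
          f ![false, true] * f ![true, false] ≠ 0) :
    HClone ((fun g => (⟨2, g⟩ : Fn)) '' {g | InI g} ∪ {⟨2, NEQfn⟩, ⟨2, tfn μ⟩})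
      ⟨2, f⟩ := by
  rw [← binFn_of f]
  exact HClone.binFn_of_det_ne_zero (fun _ => diagonal_mem_holantGens)
    (transvection_mem_holantGens hμ) (swapMatrix_mem_holantGens μ) (by simpa [det_bool] using hf)
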